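/- Let α ∈ ℝ and let P : ℕ → ℝ[X] be the sequence of polynomials defined by P₀ = 1 and P_{n+1} = X·(1−X)·P_n' + (α + n)·X·P_n (where P_n' denotes the formal derivative). Then for every n ∈ ℕ, P_n = Σ_{k=0}^n S(n,k)·(α)_k·X^k·(1−X)^{n−k}, where S(n,k) is the Stirling number of the second kind. -/

import Mathlib

/-!
The operator `Q ↦ X(1-X)Q' + (α+n)XQ` sends `X^k(1-X)^(n-k)` to
`k X^k(1-X)^(n+1-k) + (α+k) X^(k+1)(1-X)^(n-k)`, so the coefficients of `P_n` in the basis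
`X^k(1-X)^(n-k)` satisfy `c(n+1,k+1) = (k+1) c(n,k+1) + (α+k) c(n,k)`, the recurrence solved by
`S(n,k) (α)_k`. The alternating sum defining `S(n,k)` is `Δ^k(x^n)(0) / k!`, and the Leibniz rule
`Δ^(k+1)(x f)(y) = y Δ^(k+1) f(y) + (k+1) Δ^k f(y+1)` gives it the Stirling recurrence.
-/

/-- The Pochhammer symbol (rising factorial) `(a)_k = a (a+1) ⋯ (a+k-1)`. -/
def poch (a : ℝ) (k : ℕ) : ℝ := ∏ i ∈ Finset.range k, (a + i)

/-- The Stirling numbers of the second kind,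
`S(n,k) = (1/k!) Σ_{j=0}^k C(k,j) (-1)^{k-j} j^n`. -/
noncomputable def stirling2 (n k : ℕ) : ℝ :=
  (1 / k.factorial) *
    ∑ j ∈ Finset.range (k + 1), (k.choose j : ℝ) * (-1 : ℝ) ^ (k - j) * (j : ℝ) ^ n

open Polynomial Finset fwdDiff

variable {R : Type*} [CommRing R]

lemma fwdDiff_iter_apply_add_one (f : R → R) (k : ℕ) (y : R) :
    Δ_[1] ^[k] f (y + 1) = Δ_[1] ^[k] f y + Δ_[1] ^[k + 1] f y := by
  rw [Function.iterate_succ_apply', fwdDiff]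
  ring

lemma fwdDiff_iter_succ_mul_self (f : R → R) (k : ℕ) (y : R) :
    Δ_[1] ^[k + 1] (fun x ↦ x * f x) y =
      y * Δ_[1] ^[k + 1] f y + (k + 1) * Δ_[1] ^[k] f (y + 1) := by
  induction k generalizing y with
  | zero =>
    simp only [zero_add, Function.iterate_one, Function.iterate_zero, id, fwdDiff, Nat.cast_zero]
    ring
  | succ k ih =>
    rw [Function.iterate_succ_apply' _ (k + 1), fwdDiff, ih, ih,
      Function.iterate_succ_apply' _ (k + 1), fwdDiff, fwdDiff_iter_apply_add_one _ k (y + 1)]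
    push_cast
    ring

theorem fwdDiff_iter_pow_eq_factorial_mul_stirlingSecond (n k : ℕ) :
    Δ_[1] ^[k] (fun x : R ↦ x ^ n) 0 = (k.factorial * Nat.stirlingSecond n k : ℕ) := by
  induction n generalizing k with
  | zero =>
    cases k with
    | zero => simp
    | succ k => rw [fwdDiff_iter_pow_eq_zero_of_lt k.succ_pos]; simp
  | succ n ih =>
    cases k with
    | zero => simp
    | succ k =>
      simp_rw [pow_succ']
      rw [fwdDiff_iter_succ_mul_self, fwdDiff_iter_apply_add_one _ k 0, ih, ih,
        Nat.stirlingSecond_succ_succ, Nat.factorial_succ]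
      push_cast
      ring

theorem stirling2_eq_stirlingSecond (n k : ℕ) : stirling2 n k = Nat.stirlingSecond n k := by
  have h := fwdDiff_iter_eq_sum_shift (1 : ℝ) (fun x ↦ x ^ n) k 0
  rw [fwdDiff_iter_pow_eq_factorial_mul_stirlingSecond] at h
  simp only [zero_add, nsmul_eq_mul, mul_one, zsmul_eq_mul] at h
  push_cast at h
  rw [stirling2]
  field_simp
  rw [h]
  exact sum_congr rfl fun j _ ↦ by ring

theorem poch_eq_ascPochhammer_eval (a : ℝ) (k : ℕ) :
    poch a k = (ascPochhammer ℝ k).eval a := by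
  induction k with
  | zero => simp [poch]
  | succ k ih => rw [poch, prod_range_succ, ← poch, ih, ascPochhammer_succ_eval]

lemma X_mul_derivative_X_pow (k : ℕ) : X * derivative (X ^ k : R[X]) = C (k : R) * X ^ k := by
  cases k with
  | zero => simp
  | succ k => rw [derivative_X_pow, Nat.add_sub_cancel]; ring

lemma one_sub_X_mul_derivative_one_sub_X_pow (j : ℕ) :
    (1 - X) * derivative ((1 - X) ^ j : R[X]) = -(C (j : R) * (1 - X) ^ j) := by
  cases j with
  | zero => simp
  | succ j =>
    simp only [derivative_pow, derivative_sub, derivative_one, derivative_X, Nat.add_sub_cancel]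
    ring

lemma meixner_step_X_pow_mul_one_sub_X_pow (a : R) (k j : ℕ) :
    X * (1 - X) * derivative (X ^ k * (1 - X) ^ j) + C (a + k + j) * X * (X ^ k * (1 - X) ^ j)
      = C (k : R) * X ^ k * (1 - X) ^ (j + 1) + C (a + k) * X ^ (k + 1) * (1 - X) ^ j := by
  rw [derivative_mul, C_add]
  linear_combination (1 - X) ^ (j + 1) * X_mul_derivative_X_pow (R := R) k +
    X ^ (k + 1) * one_sub_X_mul_derivative_one_sub_X_pow (R := R) j

noncomputable def meixnerCoeff (a : R) (n k : ℕ) : R :=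
  Nat.stirlingSecond n k * (ascPochhammer R k).eval a

lemma meixnerCoeff_succ_succ (a : R) (n k : ℕ) :
    meixnerCoeff a (n + 1) (k + 1) =
      (k + 1) * meixnerCoeff a n (k + 1) + (a + k) * meixnerCoeff a n k := by
  simp only [meixnerCoeff, Nat.stirlingSecond_succ_succ, ascPochhammer_succ_eval]
  push_cast
  ring

lemma meixnerCoeff_succ_zero (a : R) (n : ℕ) : meixnerCoeff a (n + 1) 0 = 0 := by
  simp [meixnerCoeff]

lemma meixnerCoeff_of_lt (a : R) {n k : ℕ} (h : n < k) : meixnerCoeff a n k = 0 := by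
  simp [meixnerCoeff, Nat.stirlingSecond_eq_zero_of_lt h]

noncomputable def meixnerPoly (a : R) (n : ℕ) : R[X] :=
  ∑ k ∈ range (n + 1), C (meixnerCoeff a n k) * X ^ k * (1 - X) ^ (n - k)

lemma meixnerPoly_zero (a : R) : meixnerPoly a 0 = 1 := by
  simp [meixnerPoly, meixnerCoeff]

lemma meixnerPoly_succ (a : R) (n : ℕ) :
    meixnerPoly a (n + 1) =
      X * (1 - X) * derivative (meixnerPoly a n) + C (a + n) * X * meixnerPoly a n := by
  set B : ℕ → R[X] := fun k ↦ X ^ k * (1 - X) ^ (n + 1 - k)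
  have step : ∀ k ∈ range (n + 1),
      X * (1 - X) * derivative (C (meixnerCoeff a n k) * X ^ k * (1 - X) ^ (n - k)) +
        C (a + n) * X * (C (meixnerCoeff a n k) * X ^ k * (1 - X) ^ (n - k)) =
      C (k * meixnerCoeff a n k) * B k + C ((a + k) * meixnerCoeff a n k) * B (k + 1) := by
    intro k hk
    have hkn : k ≤ n := Nat.lt_succ_iff.mp (mem_range.mp hk)
    have hcast : a + n = a + k + (n - k : ℕ) := by rw [Nat.cast_sub hkn]; ring
    simp only [B, C_mul, mul_assoc, derivative_C_mul, Nat.add_sub_add_right, hcast,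
      Nat.sub_add_comm hkn]
    linear_combination C (meixnerCoeff a n k) * meixner_step_X_pow_mul_one_sub_X_pow a k (n - k)
  have shift : ∑ k ∈ range (n + 1), C (k * meixnerCoeff a n k) * B k =
      ∑ k ∈ range (n + 1), C ((k + 1) * meixnerCoeff a n (k + 1)) * B (k + 1) := by
    calc _ = ∑ k ∈ range (n + 1 + 1), C (k * meixnerCoeff a n k) * B k := by
          rw [sum_range_succ _ (n + 1), meixnerCoeff_of_lt a n.lt_succ_self, mul_zero, C_0,
            zero_mul, add_zero]
      _ = _ := by
          rw [sum_range_succ']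
          push_cast
          rw [zero_mul, C_0, zero_mul, add_zero]
  rw [meixnerPoly, sum_range_succ', meixnerPoly, derivative_sum, mul_sum, mul_sum,
    ← sum_add_distrib, sum_congr rfl step, sum_add_distrib, shift, ← sum_add_distrib,
    meixnerCoeff_succ_zero, C_0, zero_mul, zero_mul, add_zero]
  refine sum_congr rfl fun k _ ↦ ?_
  rw [meixnerCoeff_succ_succ, C_add]
  ring

/-- The polynomials associated to the Meixner moments, defined by
`P_0 = 1` and `P_{n+1} = X(1-X) P_n' + (α+n) X P_n`, satisfy
`P_n = Σ_{k=0}^n S(n,k) (α)_k X^k (1-X)^{n-k}`. -/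
theorem meixner_polynomials_explicit
    (α : ℝ) (P : ℕ → Polynomial ℝ) (hP0 : P 0 = 1)
    (hP : ∀ n : ℕ, P (n + 1) =
      Polynomial.X * (1 - Polynomial.X) * Polynomial.derivative (P n) +
        Polynomial.C (α + n) * Polynomial.X * P n) :
    ∀ n : ℕ, P n = ∑ k ∈ Finset.range (n + 1),
      Polynomial.C (stirling2 n k * poch α k) * Polynomial.X ^ k *
        (1 - Polynomial.X) ^ (n - k) := by
  intro n
  simp only [stirling2_eq_stirlingSecond, poch_eq_ascPochhammer_eval]
  change P n = meixnerPoly α n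
  induction n with
  | zero => rw [hP0, meixnerPoly_zero]
  | succ n ih => rw [hP, ih, meixnerPoly_succ]
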